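/- arXiv:2601.17988 — 4 statements merged into one kernel-verified Lean document; each statement's English description precedes it below -/
import Mathlib

section
/- Let G be a set and X a G-process. Then the following are equivalent: (1) X is separable in probability; (2) there exists a G-process X′ defined on a standard probability space having the same distribution as X. Moreover, in that case the standard probability space can be chosen so that its σ-algebra equals, modulo null sets, the σ-algebra generated by countably many of the random variables X′_s, s∈S, for some countable S ⊆ G. -/
/-!
Separability in probability only involves the numbers `P (ε ≤ |X a - X b|)`, so it is a property
of the law `procLaw P X`. On a standard space `L¹` is separable; since `arctan` is a bounded
topological embedding, `L¹`-convergence of `arctan ∘ X (s n)` to `arctan ∘ X g` forces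
`X (s n) → X g` in probability, so every process on a standard space is separable in probability.

Conversely, if `S = range e` is countable and dense in probability, every `X g` is the a.s. limit
of a subsequence of `X (e n)`, hence a.s. a measurable function `Y g` of the sequence
`(X (e n))ₙ`. The law of that sequence on `ℝ^ℕ`, carrying the process `Y`, is the standard
version; on it `Y (e n)` agrees a.s. with the `n`-th coordinate, and the coordinates generate the
Borel σ-algebra of `ℝ^ℕ`.
-/


open MeasureTheory ProbabilityTheory Filter Topology symmDiff

noncomputable section

namespace Paper

variable {G : Type*} {Ω : Type*}

/-- The distribution of a `G`-process: the pushforward of `P` on `ℝ^G`. -/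
def procLaw [MeasurableSpace Ω] (P : Measure Ω) (X : G → Ω → ℝ) : Measure (G → ℝ) :=
  Measure.map (fun ω g => X g ω) P

/-- The left translation `R_g` of `ℝ^G`, `R_g((x_h)_h) = (x_{g⁻¹ h})_h`. -/
def shiftMap [Group G] (g : G) : (G → ℝ) → G → ℝ := fun x h => x (g⁻¹ * h)

/-- The (possibly non-invertible) right-style translation `Q_g((x_h)_h) = (x_{g h})_h`. -/
def transMap [Mul G] (g : G) : (G → ℝ) → G → ℝ := fun x h => x (g * h)

/-- (Left) stationarity of a `G`-process. -/
def Stationary [Mul G] [MeasurableSpace Ω] (P : Measure Ω) (X : G → Ω → ℝ) : Prop :=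
  ∀ g : G, procLaw P (fun h => X (g * h)) = procLaw P X

/-- Ergodicity of a stationary `G`-process: every a.s. translation-invariant measurable set
in `ℝ^G` has law-measure `0` or `1`. -/
def ErgodicProcess [Group G] [MeasurableSpace Ω] (P : Measure Ω) (X : G → Ω → ℝ) : Prop :=
  ∀ E : Set (G → ℝ), MeasurableSet E →
    (∀ g : G, procLaw P X ((shiftMap g ⁻¹' E) ∆ E) = 0) →
    procLaw P X E = 0 ∨ procLaw P X E = 1

/-- Weak mixing of a stationary `G`-process: the diagonal product system
`{R_g × R_g}` on `(ℝ^G × ℝ^G, ℙ_X ⊗ ℙ_X)` is ergodic. -/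
def WeaklyMixingProcess [Group G] [MeasurableSpace Ω] (P : Measure Ω) (X : G → Ω → ℝ) : Prop :=
  ∀ E : Set ((G → ℝ) × (G → ℝ)), MeasurableSet E →
    (∀ g : G, ((procLaw P X).prod (procLaw P X))
        (((fun p => (shiftMap g p.1, shiftMap g p.2)) ⁻¹' E) ∆ E) = 0) →
    ((procLaw P X).prod (procLaw P X)) E = 0 ∨ ((procLaw P X).prod (procLaw P X)) E = 1

/-- Separability in probability of a `G`-process. -/
def SeparableInProbability [MeasurableSpace Ω] (P : Measure Ω) (X : G → Ω → ℝ) : Prop :=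
  ∃ S : Set G, S.Countable ∧
    ∀ g : G, ∃ s : ℕ → G, (∀ n, s n ∈ S) ∧
      TendstoInMeasure P (fun n => X (s n)) atTop (X g)

/-- The finite dimensional distribution of the process along `gs : Fin n → G`. -/
def fdd [MeasurableSpace Ω] (P : Measure Ω) (X : G → Ω → ℝ) {n : ℕ} (gs : Fin n → G) :
    Measure (Fin n → ℝ) :=
  Measure.map (fun ω i => X (gs i) ω) P

/-- A measure on `ℝⁿ` is infinitely divisible if for every `m` it is the `m`-fold
convolution power of some probability measure. -/
def InfinitelyDivisible {n : ℕ} (μ : Measure (Fin n → ℝ)) : Prop :=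
  ∀ m : ℕ, 0 < m → ∃ ν : Measure (Fin n → ℝ), IsProbabilityMeasure ν ∧
    μ = Measure.map (fun x : Fin m → Fin n → ℝ => ∑ i, x i) (Measure.pi fun _ => ν)

/-- A `G`-process is infinitely divisible if all its finite dimensional
distributions are infinitely divisible. -/
def InfinitelyDivisibleProcess [MeasurableSpace Ω] (P : Measure Ω) (X : G → Ω → ℝ) : Prop :=
  ∀ (n : ℕ) (gs : Fin n → G), InfinitelyDivisible (fdd P X gs)

/-- Stochastic continuity of a process indexed by a topological group (or semigroup). -/
def StochasticallyContinuous [TopologicalSpace G] [MeasurableSpace Ω]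
    (P : Measure Ω) (X : G → Ω → ℝ) : Prop :=
  ∀ g₀ : G, TendstoInMeasure P X (𝓝 g₀) (X g₀)

/-- All finite dimensional characteristic functions of the process are nowhere vanishing. -/
def CharFunNonVanishing [MeasurableSpace Ω] (P : Measure Ω) (X : G → Ω → ℝ) : Prop :=
  ∀ (n : ℕ) (gs : Fin n → G) (t : Fin n → ℝ),
    (∫ x, Complex.exp (Complex.I * ((∑ i, t i * x i : ℝ) : ℂ)) ∂(fdd P X gs)) ≠ 0

/-- A measure on `ℝⁿ` is a (possibly degenerate) Gaussian measure iff each of its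
one-dimensional linear-functional pushforwards is a real Gaussian. -/
def IsGaussianMeasure {n : ℕ} (μ : Measure (Fin n → ℝ)) : Prop :=
  ∀ t : Fin n → ℝ, ∃ (m : ℝ) (v : NNReal),
    Measure.map (fun x => ∑ i, t i * x i) μ = gaussianReal m v

/-- A Gaussian `G`-process: all finite dimensional distributions are
(possibly degenerate) Gaussian. -/
def GaussianProcess [MeasurableSpace Ω] (P : Measure Ω) (X : G → Ω → ℝ) : Prop :=
  ∀ (n : ℕ) (gs : Fin n → G), IsGaussianMeasure (fdd P X gs)

/-- Ergodicity of a probability preserving `Θ`-system (maps need not be invertible). -/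
def ErgodicSystem {Θ 𝕏 : Type*} [MeasurableSpace 𝕏] (ξ : Measure 𝕏) (T : Θ → 𝕏 → 𝕏) : Prop :=
  ∀ A : Set 𝕏, MeasurableSet A → (∀ θ : Θ, ξ ((T θ ⁻¹' A) ∆ A) = 0) →
    ξ A = 0 ∨ ξ A = 1

/-- A probability preserving automorphism: a bi-measurable measure-preserving bijection
between full-measure measurable subsets. -/
def IsPPAutomorphism [MeasurableSpace Ω] (P : Measure Ω) (T : Ω → Ω) : Prop :=
  Measurable T ∧ (∀ A : Set Ω, MeasurableSet A → P (T ⁻¹' A) = P A) ∧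
  ∃ (A B : Set Ω) (σ : Ω → Ω), MeasurableSet A ∧ MeasurableSet B ∧
    P A = 1 ∧ P B = 1 ∧ Measurable σ ∧ Set.MapsTo T A B ∧ Set.MapsTo σ B A ∧
    Set.InvOn σ T A B

end Paper

open Set

theorem exists_countable_forall_exists_seq_tendsto {G T : Type*} [TopologicalSpace T]
    [SecondCountableTopology T] (F : G → T) :
    ∃ S : Set G, S.Countable ∧
      ∀ g, ∃ s : ℕ → G, (∀ n, s n ∈ S) ∧ Tendsto (F ∘ s) atTop (𝓝 (F g)) := by
  let := TopologicalSpace.induced F ‹_›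
  have := TopologicalSpace.secondCountableTopology_induced G T F
  obtain ⟨S, hSc, hSd⟩ := TopologicalSpace.exists_countable_dense G
  refine ⟨S, hSc, fun g => ?_⟩
  obtain ⟨s, hsS, hs⟩ := mem_closure_iff_seq_limit.1 (hSd g)
  exact ⟨s, hsS, (continuous_induced_dom.tendsto g).comp hs⟩

theorem Real.isEmbedding_arctan : IsEmbedding Real.arctan :=
  Real.arctan_strictMono.isEmbedding_of_ordConnected <| by
    rw [Real.range_arctan]
    exact ordConnected_Ioo

namespace MeasureTheory

variable {α : Type*} [MeasurableSpace α] {μ : Measure α}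

theorem TendstoInMeasure.of_isInducing_comp {E F : Type*} [PseudoEMetricSpace E]
    [PseudoEMetricSpace F] [IsFiniteMeasure μ] {f : ℕ → α → E} {g : α → E}
    (hf : ∀ n, AEStronglyMeasurable (f n) μ) {φ : E → F} (hφ : IsInducing φ)
    (h : TendstoInMeasure μ (fun n => φ ∘ f n) atTop (φ ∘ g)) : TendstoInMeasure μ f atTop g := by
  refine (exists_seq_tendstoInMeasure_atTop_iff hf).2 fun ns hns => ?_
  obtain ⟨ns', hns', hae⟩ := (h.comp hns.tendsto_atTop).exists_seq_tendsto_ae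
  exact ⟨ns', hns', hae.mono fun x hx => hφ.tendsto_nhds_iff.2 hx⟩

theorem TendstoInMeasure.exists_measurable_comp_ae_eq {ξ : ℕ → α → ℝ} (hξ : ∀ n, Measurable (ξ n))
    {Z : α → ℝ} (h : TendstoInMeasure μ ξ atTop Z) :
    ∃ Y : (ℕ → ℝ) → ℝ, Measurable Y ∧ (fun a => Y fun n => ξ n a) =ᵐ[μ] Z := by
  obtain ⟨ns, -, hns⟩ := h.exists_seq_tendsto_ae
  have hφ : Measurable fun a n => ξ n a := measurable_pi_lambda _ hξ
  have hconv : ∀ᵐ x ∂μ.map fun a n => ξ n a, ∃ c, Tendsto (fun i => x (ns i)) atTop (𝓝 c) := by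
    rw [ae_map_iff hφ.aemeasurable
      (measurableSet_exists_tendsto fun i => measurable_pi_apply (ns i))]
    filter_upwards [hns] with a ha using ⟨Z a, ha⟩
  obtain ⟨Y, hY, hlim⟩ := measurable_limit_of_tendsto_metrizable_ae
    (fun i => (measurable_pi_apply (ns i)).aemeasurable) hconv
  refine ⟨Y, hY, ?_⟩
  filter_upwards [ae_of_ae_map hφ.aemeasurable hlim, hns] with a h₁ h₂
  exact tendsto_nhds_unique h₁ h₂

end MeasureTheory

namespace Paper

variable {G Ω : Type*} [MeasurableSpace Ω] {P : Measure Ω} {X : G → Ω → ℝ}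

theorem procLaw_apply_edist_ge (hX : ∀ g, Measurable (X g)) (a b : G) (ε : ENNReal) :
    procLaw P X {x | ε ≤ edist (x a) (x b)} = P {ω | ε ≤ edist (X a ω) (X b ω)} :=
  Measure.map_apply (measurable_pi_lambda _ hX)
    (measurableSet_le measurable_const ((measurable_pi_apply a).edist (measurable_pi_apply b)))

theorem separableInProbability_procLaw_iff (hX : ∀ g, Measurable (X g)) :
    SeparableInProbability (procLaw P X) (fun g x => x g) ↔ SeparableInProbability P X := by
  simp only [SeparableInProbability, TendstoInMeasure, procLaw_apply_edist_ge hX]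

theorem separableInProbability_of_isSeparable [IsFiniteMeasure P] [IsSeparable P]
    (hX : ∀ g, AEStronglyMeasurable (X g) P) : SeparableInProbability P X := by
  have hL1 : ∀ g, MemLp (fun ω => Real.arctan (X g ω)) 1 P := fun g =>
    .of_bound (Real.continuous_arctan.comp_aestronglyMeasurable (hX g)) (Real.pi / 2) <|
      ae_of_all _ fun ω => (abs_le.2 ⟨(Real.neg_pi_div_two_lt_arctan _).le,
        (Real.arctan_lt_pi_div_two _).le⟩)
  have : Fact ((1 : ENNReal) ≠ ⊤) := ⟨ENNReal.one_ne_top⟩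
  obtain ⟨S, hSc, hS⟩ := exists_countable_forall_exists_seq_tendsto fun g => (hL1 g).toLp
  refine ⟨S, hSc, fun g => ?_⟩
  obtain ⟨s, hsS, hs⟩ := hS g
  refine ⟨s, hsS, .of_isInducing_comp (fun n => hX (s n)) Real.isEmbedding_arctan.isInducing ?_⟩
  exact (tendstoInMeasure_of_tendsto_Lp hs).congr (fun n => (hL1 (s n)).coeFn_toLp)
    (hL1 g).coeFn_toLp

theorem procLaw_congr [IsFiniteMeasure P] {Y : G → Ω → ℝ} (hX : ∀ g, Measurable (X g))
    (hY : ∀ g, Measurable (Y g)) (h : ∀ g, X g =ᵐ[P] Y g) : procLaw P X = procLaw P Y := by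
  refine IsProjectiveLimit.unique (P := fun I => (P.map fun ω g => X g ω).map I.restrict)
    (fun _ => rfl) fun I => ?_
  have hXm := measurable_pi_lambda _ hX
  have hYm := measurable_pi_lambda _ hY
  dsimp only [procLaw]
  rw [Measure.map_map (Finset.measurable_restrict I) hXm,
    Measure.map_map (Finset.measurable_restrict I) hYm]
  refine Measure.map_congr ?_
  filter_upwards [(ae_ball_iff I.countable_toSet).2 fun g _ => h g] with ω hω
  exact funext fun g => (hω g g.2).symm

theorem measurableSpace_pi_le_eventuallyMeasurableSpace {ι β : Type*} [MeasurableSpace β]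
    {μ : Measure (ι → β)} {Y : G → (ι → β) → β} {e : ι → G}
    (h : ∀ i, Y (e i) =ᵐ[μ] fun x => x i) :
    MeasurableSpace.pi ≤
      eventuallyMeasurableSpace (⨆ s ∈ range e, MeasurableSpace.comap (Y s) inferInstance)
        (ae μ) := by
  refine iSup_le fun i => Measurable.comap_le ?_
  refine Measurable.eventuallyMeasurable_of_eventuallyEq ?_ (h i).symm
  exact Measurable.of_comap_le (le_iSup₂_of_le (e i) (mem_range_self i) le_rfl)

theorem exists_measurable_comp_coordinates_ae_eq (hX : ∀ g, Measurable (X g)) {e : ℕ → G}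
    (he : ∀ g, ∃ s : ℕ → G, (∀ n, s n ∈ range e) ∧
      TendstoInMeasure P (fun n => X (s n)) atTop (X g)) (g : G) :
    ∃ Y : (ℕ → ℝ) → ℝ, Measurable Y ∧ (fun ω => Y fun n => X (e n) ω) =ᵐ[P] X g := by
  obtain ⟨s, hsS, hs⟩ := he g
  choose k hk using hsS
  have hs' : TendstoInMeasure P (fun n => X (e (k n))) atTop (X g) := by simpa only [hk] using hs
  obtain ⟨Y, hY, hYX⟩ := hs'.exists_measurable_comp_ae_eq fun n => hX (e (k n))
  exact ⟨fun x => Y fun n => x (k n),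
    hY.comp (measurable_pi_lambda _ fun n => measurable_pi_apply _), hYX⟩

theorem procLaw_of_isEmpty [IsEmpty G] [IsProbabilityMeasure P] :
    procLaw P X = Measure.dirac isEmptyElim := by
  rw [procLaw, Subsingleton.elim (fun ω g => X g ω) fun _ => isEmptyElim, Measure.map_const,
    measure_univ, one_smul]

theorem SeparableInProbability.exists_standard_version [IsProbabilityMeasure P]
    (hX : ∀ g, Measurable (X g)) (hsep : SeparableInProbability P X) :
    ∃ (Ω' : Type) (_ : MeasurableSpace Ω') (P' : Measure Ω') (X' : G → Ω' → ℝ),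
      StandardBorelSpace Ω' ∧ IsProbabilityMeasure P' ∧ (∀ g, Measurable (X' g)) ∧
      procLaw P' X' = procLaw P X ∧
      ∃ S : Set G, S.Countable ∧
        ∀ A : Set Ω', MeasurableSet A →
          ∃ B : Set Ω',
            MeasurableSet[⨆ s ∈ S, MeasurableSpace.comap (X' s) inferInstance] B ∧
            P' (A ∆ B) = 0 := by
  -- `S` is enumerated by `ℕ` below, which needs `G` to be nonempty
  rcases isEmpty_or_nonempty G with hG | ⟨⟨g₀⟩⟩
  · refine ⟨Unit, inferInstance, .dirac (), isEmptyElim, inferInstance, inferInstance,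
      isEmptyElim, by rw [procLaw_of_isEmpty, procLaw_of_isEmpty], ∅, countable_empty,
      fun A _ => ⟨A, Subsingleton.measurableSet, by simp⟩⟩
  obtain ⟨S, hSc, hS⟩ := hsep
  obtain ⟨s₀, hs₀, -⟩ := hS g₀
  obtain ⟨e, rfl⟩ := hSc.exists_eq_range ⟨s₀ 0, hs₀ 0⟩
  choose Y hY hYX using exists_measurable_comp_coordinates_ae_eq hX hS
  have hφ : Measurable fun ω n => X (e n) ω := measurable_pi_lambda _ fun n => hX (e n)
  refine ⟨ℕ → ℝ, inferInstance, P.map fun ω n => X (e n) ω, Y, inferInstance,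
    Measure.isProbabilityMeasure_map hφ.aemeasurable, hY, ?_, range e, countable_range e,
    fun A hA => ?_⟩
  · rw [procLaw, Measure.map_map (measurable_pi_lambda _ hY) hφ]
    exact procLaw_congr (fun g => (hY g).comp hφ) hX hYX
  · have hYe : ∀ n, Y (e n) =ᵐ[P.map fun ω n => X (e n) ω] fun x => x n := fun n =>
      (ae_map_iff hφ.aemeasurable (measurableSet_eq_fun (hY (e n)) (measurable_pi_apply n))).2
        (hYX (e n))
    obtain ⟨B, hB, hAB⟩ := measurableSpace_pi_le_eventuallyMeasurableSpace hYe A hA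
    exact ⟨B, hB, measure_symmDiff_eq_zero_iff.2 hAB⟩

/-- a `G`-process is separable in probability iff it has a version
defined on a standard probability space; moreover the space may be chosen so that
its σ-algebra is generated modulo null sets by countably many coordinates. -/
theorem separableInProbability_iff_standard
    {G : Type*} {Ω : Type*} [MeasurableSpace Ω]
    (P : Measure Ω) [IsProbabilityMeasure P] (X : G → Ω → ℝ)
    (hmeas : ∀ g, Measurable (X g)) :
    (SeparableInProbability P X ↔
      ∃ (Ω' : Type) (_ : MeasurableSpace Ω') (P' : Measure Ω') (X' : G → Ω' → ℝ),
        StandardBorelSpace Ω' ∧ IsProbabilityMeasure P' ∧ (∀ g, Measurable (X' g)) ∧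
        procLaw P' X' = procLaw P X) ∧
    (SeparableInProbability P X →
      ∃ (Ω' : Type) (_ : MeasurableSpace Ω') (P' : Measure Ω') (X' : G → Ω' → ℝ),
        StandardBorelSpace Ω' ∧ IsProbabilityMeasure P' ∧ (∀ g, Measurable (X' g)) ∧
        procLaw P' X' = procLaw P X ∧
        ∃ S : Set G, S.Countable ∧
          ∀ A : Set Ω', MeasurableSet A →
            ∃ B : Set Ω',
              MeasurableSet[⨆ s ∈ S, MeasurableSpace.comap (X' s) inferInstance] B ∧
              P' (A ∆ B) = 0) := by
  refine ⟨⟨fun hsep => ?_, ?_⟩, fun hsep => hsep.exists_standard_version hmeas⟩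
  · obtain ⟨Ω', _, P', X', hΩ', hP', hX', hlaw, -⟩ := hsep.exists_standard_version hmeas
    exact ⟨Ω', _, P', X', hΩ', hP', hX', hlaw⟩
  · rintro ⟨Ω', _, P', X', _, _, hX', hlaw⟩
    rw [← separableInProbability_procLaw_iff hmeas, ← hlaw, separableInProbability_procLaw_iff hX']
    exact separableInProbability_of_isSeparable fun g => (hX' g).aestronglyMeasurable

end Paper
end
end

section
/- Let G be a group, X a separable in probability stationary G-process, and let (Ĝ, τ, X̂) be any stochastically continuous extension of X. Then X is G-ergodic if and only if X̂ is Ĝ-ergodic. -/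
open MeasureTheory ProbabilityTheory Filter Topology symmDiff

noncomputable section

namespace Paper

variable {G : Type*} {Ω : Type*}

/-!
Let `ν` be the law of `Y` on `ℝ^H` and `π y = y ∘ τ`; then `π` pushes `ν` to the law of `X` and
intertwines the translations `R_{τ g}` and `R_g`. Stochastic continuity of `Y` yields two facts.

* Each coordinate `y h` is a `ν`-a.e. limit of coordinates `y (τ gₙ)`, so every measurable subset
  of `ℝ^H` is `ν`-a.e. equal to `π⁻¹ E` for a measurable `E ⊆ ℝ^G`. An `H`-invariant set thus comes
  from a `G`-invariant set of the same measure.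
* The function `h ↦ ν (R_h⁻¹ F ∆ F)` is subadditive and tends to `0` at `1`. For the generating
  sets `{y a ≤ c}` the latter holds because `y (h⁻¹ a) → y a` in measure and both have the same
  law; the sets with this property form a σ-algebra. Hence a set invariant under the dense
  subgroup `τ(G)` is invariant under all of `H`.
-/

open Set

section PreimageSymmDiff

variable {α ι : Type*} [MeasurableSpace α] {ν : Measure α}

lemma measure_preimage_symmDiff_le {f : α → α} (hf : MeasurePreserving f ν ν)
    {A B : Set α} (hA : MeasurableSet A) (hB : MeasurableSet B) :
    ν ((f ⁻¹' A) ∆ A) ≤ ν ((f ⁻¹' B) ∆ B) + 2 * ν (A ∆ B) := by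
  have hpre : ν ((f ⁻¹' A) ∆ (f ⁻¹' B)) = ν (A ∆ B) := by
    rw [← preimage_symmDiff, hf.measure_preimage (hA.symmDiff hB).nullMeasurableSet]
  calc ν ((f ⁻¹' A) ∆ A)
      ≤ ν ((f ⁻¹' A) ∆ (f ⁻¹' B)) + (ν ((f ⁻¹' B) ∆ B) + ν (B ∆ A)) :=
        (measure_symmDiff_le _ (f ⁻¹' B) _).trans (by gcongr; exact measure_symmDiff_le _ _ _)
    _ = ν ((f ⁻¹' B) ∆ B) + 2 * ν (A ∆ B) := by rw [hpre, symmDiff_comm B]; ring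

variable {T : ι → α → α} {l : Filter ι}

lemma tendsto_measure_preimage_symmDiff_of_approx (hT : ∀ i, MeasurePreserving (T i) ν ν)
    {A : Set α} (hA : MeasurableSet A)
    (happrox : ∀ ε > 0, ∃ B, MeasurableSet B ∧ ν (A ∆ B) ≤ ε ∧
      Tendsto (fun i => ν ((T i ⁻¹' B) ∆ B)) l (𝓝 0)) :
    Tendsto (fun i => ν ((T i ⁻¹' A) ∆ A)) l (𝓝 0) := by
  rw [ENNReal.tendsto_nhds_zero]
  intro ε hε
  have hε3 : 0 < ε / 3 := ENNReal.div_pos hε.ne' ENNReal.ofNat_ne_top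
  obtain ⟨B, hB, hAB, hBlim⟩ := happrox (ε / 3) hε3
  filter_upwards [ENNReal.tendsto_nhds_zero.1 hBlim (ε / 3) hε3] with i hi
  calc ν ((T i ⁻¹' A) ∆ A) ≤ ν ((T i ⁻¹' B) ∆ B) + 2 * ν (A ∆ B) :=
        measure_preimage_symmDiff_le (hT i) hA hB
    _ ≤ ε / 3 + 2 * (ε / 3) := by gcongr
    _ = ε := by rw [two_mul, ← add_assoc, ENNReal.add_thirds]

lemma tendsto_measure_preimage_symmDiff_union {s t : Set α}
    (hs : Tendsto (fun i => ν ((T i ⁻¹' s) ∆ s)) l (𝓝 0))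
    (ht : Tendsto (fun i => ν ((T i ⁻¹' t) ∆ t)) l (𝓝 0)) :
    Tendsto (fun i => ν ((T i ⁻¹' (s ∪ t)) ∆ (s ∪ t))) l (𝓝 0) := by
  refine tendsto_of_tendsto_of_tendsto_of_le_of_le tendsto_const_nhds
    (by simpa using hs.add ht) (fun _ => zero_le) fun i => ?_
  calc ν ((T i ⁻¹' (s ∪ t)) ∆ (s ∪ t)) ≤ ν ((T i ⁻¹' s) ∆ s ∪ (T i ⁻¹' t) ∆ t) :=
        measure_mono union_symmDiff_union_subset
    _ ≤ _ := measure_union_le _ _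

lemma tendsto_measure_preimage_symmDiff_iUnion [IsFiniteMeasure ν]
    (hT : ∀ i, MeasurePreserving (T i) ν ν) {s : ℕ → Set α} (hs : ∀ n, MeasurableSet (s n))
    (hlim : ∀ n, Tendsto (fun i => ν ((T i ⁻¹' s n) ∆ s n)) l (𝓝 0)) :
    Tendsto (fun i => ν ((T i ⁻¹' (⋃ n, s n)) ∆ ⋃ n, s n)) l (𝓝 0) := by
  have hacc : ∀ N, Tendsto (fun i => ν ((T i ⁻¹' accumulate s N) ∆ accumulate s N)) l (𝓝 0) := by
    intro N
    induction N with
    | zero => simpa using hlim 0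
    | succ N ih => simpa using tendsto_measure_preimage_symmDiff_union ih (hlim (N + 1))
  have hacc_meas : ∀ N, MeasurableSet (accumulate s N) := fun N =>
    .biUnion (to_countable _) fun n _ => hs n
  have htail : Tendsto (fun N => ν ((⋃ n, s n) ∆ accumulate s N)) atTop (𝓝 0) := by
    have hdiff : ∀ N, ν ((⋃ n, s n) ∆ accumulate s N) = ν (⋃ n, s n) - ν (accumulate s N) :=
      fun N => by
        rw [symmDiff_of_ge (accumulate_subset_iUnion N), measure_sdiff
          (accumulate_subset_iUnion N) (hacc_meas N).nullMeasurableSet (measure_ne_top _ _)]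
    simpa [hdiff] using ENNReal.Tendsto.sub (tendsto_const_nhds (x := ν (⋃ n, s n)))
      (tendsto_measure_iUnion_accumulate (μ := ν) (f := s)) (.inl (measure_ne_top ν _))
  refine tendsto_measure_preimage_symmDiff_of_approx hT (.iUnion hs) fun ε hε => ?_
  obtain ⟨N, hN⟩ := (ENNReal.tendsto_nhds_zero.1 htail ε hε).exists
  exact ⟨accumulate s N, hacc_meas N, hN, hacc N⟩

lemma tendsto_measure_preimage_symmDiff_of_generateFrom [IsFiniteMeasure ν]
    (hT : ∀ i, MeasurePreserving (T i) ν ν) {C : Set (Set α)}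
    (hgen : ‹MeasurableSpace α› = MeasurableSpace.generateFrom C)
    (hC : ∀ s ∈ C, Tendsto (fun i => ν ((T i ⁻¹' s) ∆ s)) l (𝓝 0))
    {s : Set α} (hs : MeasurableSet s) :
    Tendsto (fun i => ν ((T i ⁻¹' s) ∆ s)) l (𝓝 0) := by
  rw [hgen] at hs
  induction s, hs using MeasurableSpace.generateFrom_induction with
  | hC s hs => exact hC s hs
  | empty => simpa using tendsto_const_nhds
  | compl s _ ih => simpa [preimage_compl, compl_symmDiff_compl] using ih
  | iUnion s hs ih =>
    exact tendsto_measure_preimage_symmDiff_iUnion hT (fun n => hgen ▸ hs n) ih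

end PreimageSymmDiff

lemma MeasurableSpace.pi_eq_generateFrom_preimage_Iic {ι : Type*} :
    (MeasurableSpace.pi : MeasurableSpace (ι → ℝ)) =
      MeasurableSpace.generateFrom {s | ∃ i c, s = (fun x : ι → ℝ => x i) ⁻¹' Iic c} := by
  simp only [MeasurableSpace.pi, BorelSpace.measurable_eq (α := ℝ), borel_eq_generateFrom_Iic,
    MeasurableSpace.comap_generateFrom, MeasurableSpace.iSup_generateFrom]
  congr 1
  ext s
  simp [eq_comm]

section RealValued

variable {α ι : Type*} [MeasurableSpace α] {ν : Measure α}

lemma measure_preimage_Iic_symmDiff_le (f g : α → ℝ) {c r : ℝ} :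
    ν ((f ⁻¹' Iic c) ∆ (g ⁻¹' Iic c)) ≤
      ν {x | ENNReal.ofReal (r - c) ≤ edist (f x) (g x)} +
        (ν (f ⁻¹' Ioc c r) + ν (g ⁻¹' Ioc c r)) := by
  refine (measure_mono fun x hx => ?_).trans
    ((measure_union_le _ _).trans (by gcongr; exact measure_union_le _ _))
  simp only [mem_symmDiff, mem_preimage, mem_Iic, mem_Ioc, mem_union, mem_ofPred_eq,
    edist_dist, Real.dist_eq, ENNReal.ofReal_le_ofReal_iff (abs_nonneg _)] at hx ⊢
  rcases le_or_gt (r - c) |f x - g x| with hd | hd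
  · exact .inl hd
  · rw [abs_lt] at hd
    right
    rcases hx with ⟨hf, hg⟩ | ⟨hg, hf⟩
    · exact .inr ⟨not_le.1 hg, by linarith⟩
    · exact .inl ⟨not_le.1 hf, by linarith⟩

lemma tendsto_measure_preimage_Ioc [IsFiniteMeasure ν] {f : α → ℝ} (hf : Measurable f)
    (c : ℝ) : Tendsto (fun r => ν (f ⁻¹' Ioc c r)) (𝓝[>] c) (𝓝 0) := by
  have hempty : ⋂ r > c, f ⁻¹' Ioc c r = ∅ := by
    ext x
    simp only [mem_iInter, mem_preimage, mem_Ioc, mem_empty_iff_false, iff_false, not_forall]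
    by_cases hx : c < f x
    · exact ⟨(c + f x) / 2, by linarith, fun h => by linarith [h.2]⟩
    · exact ⟨c + 1, by linarith, fun h => hx h.1⟩
  have h := tendsto_measure_biInter_gt (μ := ν) (s := fun r => f ⁻¹' Ioc c r)
    (fun r _ => (hf measurableSet_Ioc).nullMeasurableSet)
    (fun r r' _ hrr' => preimage_mono (Ioc_subset_Ioc_right hrr'))
    ⟨c + 1, by linarith, measure_ne_top _ _⟩
  rwa [hempty, measure_empty] at h

lemma TendstoInMeasure.tendsto_measure_preimage_Iic_symmDiff [IsFiniteMeasure ν]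
    {l : Filter ι} {F : ι → α → ℝ} {f : α → ℝ} (hFf : TendstoInMeasure ν F l f)
    (hf : Measurable f) (hid : ∀ i, IdentDistrib (F i) f ν ν) (c : ℝ) :
    Tendsto (fun i => ν ((F i ⁻¹' Iic c) ∆ (f ⁻¹' Iic c))) l (𝓝 0) := by
  rw [ENNReal.tendsto_nhds_zero]
  intro ε hε
  have hε3 : 0 < ε / 3 := ENNReal.div_pos hε.ne' ENNReal.ofNat_ne_top
  obtain ⟨r, hr, hcr⟩ := ((ENNReal.tendsto_nhds_zero.1 (tendsto_measure_preimage_Ioc (ν := ν) hf c))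
    (ε / 3) hε3 |>.and self_mem_nhdsWithin).exists
  filter_upwards [ENNReal.tendsto_nhds_zero.1
    (hFf _ (ENNReal.ofReal_pos.2 (sub_pos.2 hcr))) (ε / 3) hε3] with i hi
  calc ν ((F i ⁻¹' Iic c) ∆ (f ⁻¹' Iic c))
      ≤ ν {x | ENNReal.ofReal (r - c) ≤ edist (F i x) (f x)} +
        (ν (F i ⁻¹' Ioc c r) + ν (f ⁻¹' Ioc c r)) := measure_preimage_Iic_symmDiff_le _ _
    _ ≤ ε / 3 + (ε / 3 + ε / 3) := by
        rw [(hid i).measure_mem_eq measurableSet_Ioc]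
        gcongr
    _ = ε := by rw [← add_assoc, ENNReal.add_thirds]

end RealValued

section Shifts

variable {H : Type*} [Group H]

lemma measurable_shiftMap (h : H) : Measurable (shiftMap h) :=
  measurable_pi_lambda _ fun _ => measurable_pi_apply _

lemma shiftMap_mul (a b : H) : shiftMap (a * b) = shiftMap a ∘ shiftMap b := by
  funext x k
  simp [shiftMap, mul_assoc]

variable {ν : Measure (H → ℝ)}

lemma measure_shiftMap_mul_preimage_symmDiff_le (hν : ∀ h, MeasurePreserving (shiftMap h) ν ν)
    {F : Set (H → ℝ)} (hF : MeasurableSet F) (a b : H) :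
    ν ((shiftMap (a * b) ⁻¹' F) ∆ F) ≤ ν ((shiftMap a ⁻¹' F) ∆ F) + ν ((shiftMap b ⁻¹' F) ∆ F) := by
  rw [shiftMap_mul, preimage_comp]
  calc _ ≤ ν ((shiftMap b ⁻¹' (shiftMap a ⁻¹' F)) ∆ (shiftMap b ⁻¹' F)) +
        ν ((shiftMap b ⁻¹' F) ∆ F) := measure_symmDiff_le _ _ _
    _ = _ := by
      rw [← preimage_symmDiff, (hν b).measure_preimage
        (((measurable_shiftMap a) hF).symmDiff hF).nullMeasurableSet]

lemma measure_shiftMap_preimage_symmDiff_congr (hν : ∀ h, MeasurePreserving (shiftMap h) ν ν)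
    {F F' : Set (H → ℝ)} (hFF' : F =ᵐ[ν] F') (h : H) :
    ν ((shiftMap h ⁻¹' F) ∆ F) = ν ((shiftMap h ⁻¹' F') ∆ F') :=
  measure_congr (((hν h).quasiMeasurePreserving.preimage_ae_eq hFF').symmDiff hFF')

variable [TopologicalSpace H] [IsTopologicalGroup H] [IsFiniteMeasure ν]

theorem tendsto_measure_shiftMap_preimage_symmDiff
    (hν : ∀ h, MeasurePreserving (shiftMap h) ν ν)
    (hcont : ∀ h₀, TendstoInMeasure ν (fun h x => x h) (𝓝 h₀) (fun x => x h₀))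
    {F : Set (H → ℝ)} (hF : MeasurableSet F) :
    Tendsto (fun h => ν ((shiftMap h ⁻¹' F) ∆ F)) (𝓝 1) (𝓝 0) := by
  refine tendsto_measure_preimage_symmDiff_of_generateFrom hν
    MeasurableSpace.pi_eq_generateFrom_preimage_Iic ?_ hF
  rintro _ ⟨a, c, rfl⟩
  have hlim : Tendsto (fun h : H => h⁻¹ * a) (𝓝 1) (𝓝 a) := by
    simpa using (tendsto_inv (1 : H)).mul_const a
  have hid : ∀ h : H, IdentDistrib (fun x : H → ℝ => x (h⁻¹ * a)) (fun x => x a) ν ν :=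
    fun h => ⟨(measurable_pi_apply _).aemeasurable, (measurable_pi_apply a).aemeasurable, by
      change ν.map ((fun x => x a) ∘ shiftMap h) = _
      rw [← Measure.map_map (measurable_pi_apply a) (measurable_shiftMap h), (hν h).map_eq]⟩
  exact TendstoInMeasure.tendsto_measure_preimage_Iic_symmDiff
    (fun ε hε => (hcont a ε hε).comp hlim) (measurable_pi_apply a) hid c

theorem measure_shiftMap_preimage_symmDiff_eq_zero_of_denseRange {τ : G → H}
    (hτ : DenseRange τ) (hν : ∀ h, MeasurePreserving (shiftMap h) ν ν)
    (hcont : ∀ h₀, TendstoInMeasure ν (fun h x => x h) (𝓝 h₀) (fun x => x h₀))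
    {F : Set (H → ℝ)} (hF : MeasurableSet F) (hinv : ∀ g, ν ((shiftMap (τ g) ⁻¹' F) ∆ F) = 0)
    (h : H) : ν ((shiftMap h ⁻¹' F) ∆ F) = 0 := by
  have := hτ.nhdsWithin_neBot h
  have hlim : Tendsto (fun k => h * k⁻¹) (𝓝[range τ] h) (𝓝 1) := by
    simpa using ((tendsto_inv h).const_mul h).mono_left nhdsWithin_le_nhds
  refine le_antisymm (ge_of_tendsto
    ((tendsto_measure_shiftMap_preimage_symmDiff hν hcont hF).comp hlim) ?_) zero_le
  filter_upwards [self_mem_nhdsWithin]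
  rintro _ ⟨g, rfl⟩
  calc ν ((shiftMap h ⁻¹' F) ∆ F) = ν ((shiftMap (h * (τ g)⁻¹ * τ g) ⁻¹' F) ∆ F) := by
        rw [inv_mul_cancel_right]
    _ ≤ ν ((shiftMap (h * (τ g)⁻¹) ⁻¹' F) ∆ F) + ν ((shiftMap (τ g) ⁻¹' F) ∆ F) :=
        measure_shiftMap_mul_preimage_symmDiff_le hν hF _ _
    _ = ν ((shiftMap (h * (τ g)⁻¹) ⁻¹' F) ∆ F) := by rw [hinv, add_zero]

end Shifts

lemma measurable_comp_right {κ ι : Type*} (j : κ → ι) : Measurable fun x : ι → ℝ => x ∘ j :=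
  measurable_pi_lambda _ fun k => measurable_pi_apply (j k)

section CoordinateApproximation

variable {ι κ : Type*} {ν : Measure (ι → ℝ)} {j : κ → ι}

lemma exists_measurable_ae_eq_comp_of_ae_tendsto {i : ι} {q : ℕ → κ}
    (hq : ∀ᵐ x ∂ν, Tendsto (fun n => x (j (q n))) atTop (𝓝 (x i))) :
    ∃ L : (κ → ℝ) → ℝ, Measurable L ∧ (fun x => x i) =ᵐ[ν] fun x => L (x ∘ j) :=
  ⟨fun z => limsup (fun n => z (q n)) atTop, Measurable.limsup fun _ => measurable_pi_apply _,
    hq.mono fun _ hx => hx.limsup_eq.symm⟩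

theorem exists_measurableSet_ae_eq_preimage_comp
    (hj : ∀ i, ∃ q : ℕ → κ, ∀ᵐ x ∂ν, Tendsto (fun n => x (j (q n))) atTop (𝓝 (x i)))
    {F : Set (ι → ℝ)} (hF : MeasurableSet F) :
    ∃ E : Set (κ → ℝ), MeasurableSet E ∧ F =ᵐ[ν] (· ∘ j) ⁻¹' E := by
  rw [MeasurableSpace.pi_eq_generateFrom_preimage_Iic] at hF
  induction F, hF using MeasurableSpace.generateFrom_induction with
  | hC _ hs =>
    obtain ⟨i, c, rfl⟩ := hs
    obtain ⟨q, hq⟩ := hj i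
    obtain ⟨L, hL, hiL⟩ := exists_measurable_ae_eq_comp_of_ae_tendsto hq
    exact ⟨L ⁻¹' Iic c, hL measurableSet_Iic, hiL.preimage _⟩
  | empty => exact ⟨∅, .empty, by simp⟩
  | compl _ _ ih =>
    obtain ⟨E, hE, hFE⟩ := ih
    exact ⟨Eᶜ, hE.compl, hFE.compl⟩
  | iUnion s _ ih =>
    choose E hE hsE using ih
    exact ⟨⋃ n, E n, .iUnion hE, by
      simpa only [preimage_iUnion] using Filter.EventuallyEq.countable_iUnion hsE⟩

lemma exists_seq_ae_tendsto_of_denseRange {H : Type*} [TopologicalSpace H]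
    [FirstCountableTopology H] {ν : Measure (H → ℝ)} {τ : G → H} (hτ : DenseRange τ)
    (hcont : ∀ h₀, TendstoInMeasure ν (fun h x => x h) (𝓝 h₀) (fun x => x h₀)) (h : H) :
    ∃ q : ℕ → G, ∀ᵐ x ∂ν, Tendsto (fun n => x (τ (q n))) atTop (𝓝 (x h)) := by
  have : NeBot (comap τ (𝓝 h)) := comap_neBot fun t ht => by
    obtain ⟨_, ⟨g, rfl⟩, hg⟩ := hτ.inter_nhds_nonempty ht
    exact ⟨g, hg⟩
  have hlim : TendstoInMeasure ν (fun g x => x (τ g)) (comap τ (𝓝 h)) (fun x => x h) :=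
    fun ε hε => (hcont h ε hε).comp tendsto_comap
  obtain ⟨q, -, hq⟩ := hlim.exists_seq_tendsto_ae'
  exact ⟨q, hq⟩

end CoordinateApproximation

section ProcessLaw

variable [MeasurableSpace Ω] {P : Measure Ω} {Y : G → Ω → ℝ}

lemma measurePreserving_shiftMap_procLaw [Group G] (hY : ∀ g, Measurable (Y g))
    (hstat : Stationary P Y) (g : G) :
    MeasurePreserving (shiftMap g) (procLaw P Y) (procLaw P Y) :=
  ⟨measurable_shiftMap g, by
    rw [procLaw, Measure.map_map (measurable_shiftMap g) (measurable_pi_lambda _ hY)]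
    exact hstat g⁻¹⟩

lemma tendstoInMeasure_procLaw [TopologicalSpace G] (hY : ∀ g, Measurable (Y g))
    (hcont : StochasticallyContinuous P Y) (g₀ : G) :
    TendstoInMeasure (procLaw P Y) (fun g x => x g) (𝓝 g₀) (fun x => x g₀) := by
  intro ε hε
  convert hcont g₀ ε hε using 2 with g
  exact Measure.map_apply (measurable_pi_lambda _ hY)
    (measurableSet_le measurable_const ((measurable_pi_apply g).edist (measurable_pi_apply g₀)))

lemma procLaw_comp {K : Type*} (hY : ∀ g, Measurable (Y g)) (τ : K → G) :
    procLaw P (fun k => Y (τ k)) = (procLaw P Y).map (· ∘ τ) := by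
  rw [procLaw, procLaw, Measure.map_map (measurable_comp_right τ) (measurable_pi_lambda _ hY)]
  rfl

end ProcessLaw

section Restriction

variable {H : Type*} [Group G] [Group H]

lemma shiftMap_comp_monoidHom (τ : G →* H) (g : G) (y : H → ℝ) :
    shiftMap g (y ∘ τ) = shiftMap (τ g) y ∘ τ := by
  funext k
  simp [shiftMap]

lemma map_comp_apply_shiftMap_preimage_symmDiff {ν : Measure (H → ℝ)} (τ : G →* H)
    {E : Set (G → ℝ)} (hE : MeasurableSet E) (g : G) :
    ν.map (· ∘ τ) ((shiftMap g ⁻¹' E) ∆ E) =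
      ν ((shiftMap (τ g) ⁻¹' ((· ∘ τ) ⁻¹' E)) ∆ ((· ∘ τ) ⁻¹' E)) := by
  rw [Measure.map_apply (measurable_comp_right τ) (((measurable_shiftMap g) hE).symmDiff hE),
    preimage_symmDiff]
  congr 2
  ext y
  exact Iff.of_eq (congrArg (· ∈ E) (shiftMap_comp_monoidHom τ g y))

end Restriction

theorem ergodic_iff_extension_ergodic_general
    {G : Type*} [Group G] {Ω : Type*} [MeasurableSpace Ω]
    (P : Measure Ω) (X : G → Ω → ℝ)
    {H : Type*} [Group H] [TopologicalSpace H] [IsTopologicalGroup H] [PolishSpace H]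
    (τ : G →* H) (hdense : DenseRange ⇑τ)
    {Ω' : Type*} [MeasurableSpace Ω'] (P' : Measure Ω') [IsProbabilityMeasure P']
    (Y : H → Ω' → ℝ) (hmeasY : ∀ h, Measurable (Y h)) (hstatY : Stationary P' Y)
    (hcontY : StochasticallyContinuous P' Y)
    (hdist : procLaw P' (fun g => Y (τ g)) = procLaw P X) :
    ErgodicProcess P X ↔ ErgodicProcess P' Y := by
  have : IsFiniteMeasure (procLaw P' Y) := by unfold procLaw; infer_instance
  have hν := measurePreserving_shiftMap_procLaw hmeasY hstatY
  have hcont := tendstoInMeasure_procLaw hmeasY hcontY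
  have hπ := measurable_comp_right (ι := H) τ
  unfold ErgodicProcess
  rw [← hdist, procLaw_comp hmeasY]
  constructor
  · intro hX F hF hFinv
    obtain ⟨E, hE, hFE⟩ := exists_measurableSet_ae_eq_preimage_comp
      (exists_seq_ae_tendsto_of_denseRange hdense hcont) hF
    rw [measure_congr hFE, ← Measure.map_apply hπ hE]
    refine hX E hE fun g => ?_
    rw [map_comp_apply_shiftMap_preimage_symmDiff τ hE,
      ← measure_shiftMap_preimage_symmDiff_congr hν hFE]
    exact hFinv (τ g)
  · intro hY E hE hEinv
    rw [Measure.map_apply hπ hE]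
    refine hY _ (hπ hE) (measure_shiftMap_preimage_symmDiff_eq_zero_of_denseRange hdense hν hcont
      (hπ hE) fun g => ?_)
    rw [← map_comp_apply_shiftMap_preimage_symmDiff τ hE]
    exact hEinv g

/-- for any stochastically continuous extension `(H, τ, Y)` of a separable
in probability stationary `G`-process `X`, `X` is `G`-ergodic iff `Y` is `H`-ergodic. -/
theorem ergodic_iff_extension_ergodic
    {G : Type*} [Group G] {Ω : Type*} [MeasurableSpace Ω]
    (P : Measure Ω) [IsProbabilityMeasure P] (X : G → Ω → ℝ)
    (hmeas : ∀ g, Measurable (X g)) (hstat : Stationary P X)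
    (hsep : SeparableInProbability P X)
    {H : Type*} [Group H] [TopologicalSpace H] [IsTopologicalGroup H] [PolishSpace H]
    (τ : G →* H) (hdense : DenseRange ⇑τ)
    {Ω' : Type*} [MeasurableSpace Ω'] (P' : Measure Ω') [IsProbabilityMeasure P']
    (Y : H → Ω' → ℝ) (hmeasY : ∀ h, Measurable (Y h)) (hstatY : Stationary P' Y)
    (hcontY : StochasticallyContinuous P' Y)
    (hdist : procLaw P' (fun g => Y (τ g)) = procLaw P X) :
    ErgodicProcess P X ↔ ErgodicProcess P' Y :=
  ergodic_iff_extension_ergodic_general P X τ hdense P' Y hmeasY hstatY hcontY hdist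

end Paper
end
end

section
/- Let G be a Polish group, (Ω,ℱ,ℙ) a standard probability space, and T : G × Ω → Ω a probability preserving action of G on (Ω,ℱ,ℙ), i.e. a jointly measurable map (g,ω) ↦ T_g(ω) with T_{e_G} = Id ℙ-a.s., T_g∘T_h = T_{gh} ℙ-a.s. for all g,h∈G, and each T_g measure preserving. Then for every A∈ℱ the function G → [0,1], g ↦ ℙ(T_g⁻¹(A) △ A), is continuous. -/
/-!
The sets `T g ⁻¹' A` form an orbit in the measure algebra of `P`, with pseudo-distance
`d(E, F) = P (E ∆ F)`, and the composition law makes `g ↦ P ((T g ⁻¹' A) ∆ A)` a group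
seminorm: `d(T x ⁻¹' A, T y ⁻¹' A) = P ((T (x / y) ⁻¹' A) ∆ A)`. Hence it suffices to prove
continuity at `1`. The measure algebra is separable, so countably many balls of radius `ε / 2`
around the sets of a dense family cover the orbit; their preimages in `G` are Borel, and by the
Baire category theorem one of them, `B`, is not meagre. By Pettis' theorem `B / B` is a
neighbourhood of `1`, and on it the seminorm is at most `ε`.
-/

open MeasureTheory ProbabilityTheory Filter Topology symmDiff

noncomputable section

namespace Paper

variable {G : Type*} {Ω : Type*}

open scoped ENNReal

theorem isMeagre_congr {X : Type*} [TopologicalSpace X] {s t : Set X} (h : s =ᵇ t) :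
    IsMeagre s ↔ IsMeagre t :=
  eventually_congr h.compl.mem_iff

section Pettis

open scoped Pointwise

variable [Group G] [TopologicalSpace G] [IsTopologicalGroup G] [BaireSpace G] {B : Set G}

theorem BaireMeasurableSet.div_mem_nhds_one (hB : BaireMeasurableSet B) (hB' : ¬IsMeagre B) :
    B / B ∈ 𝓝 1 := by
  obtain ⟨U, hU, hBU⟩ := hB.residualEq_isOpen
  obtain ⟨u, hu⟩ : U.Nonempty := nonempty_of_not_isMeagre fun h => hB' ((isMeagre_congr hBU).2 h)
  have hW : (· * u) ⁻¹' U ∈ 𝓝 (1 : G) :=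
    (hU.preimage (continuous_mul_const u)).mem_nhds (by simpa using hu)
  filter_upwards [hW] with g hg
  have hUU : ¬IsMeagre ((g * ·) ⁻¹' U ∩ U) :=
    not_isMeagre_of_isOpen ((hU.preimage (continuous_const_mul g)).inter hU) ⟨u, hg, hu⟩
  have hBB : ((g * ·) ⁻¹' B ∩ B : Set G) =ᵇ ((g * ·) ⁻¹' U ∩ U : Set G) :=
    (hBU.comp_tendsto (tendsto_residual_of_isOpenMap (continuous_const_mul g)
      (Homeomorph.mulLeft g).isOpenMap)).inter hBU
  obtain ⟨a, hga, ha⟩ := nonempty_of_not_isMeagre fun h => hUU ((isMeagre_congr hBB).1 h)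
  exact ⟨g * a, hga, a, ha, mul_div_cancel_right g a⟩

end Pettis

theorem continuous_of_tendsto_nhds_one [Group G] [TopologicalSpace G] [IsTopologicalGroup G]
    {φ : G → ℝ≥0∞} (hmul : ∀ x y, φ (x * y) ≤ φ x + φ y) (hinv : ∀ x, φ x⁻¹ = φ x)
    (h1 : Tendsto φ (𝓝 1) (𝓝 0)) : Continuous φ := by
  refine continuous_iff_continuousAt.2 fun g₀ => ?_
  have hdiv : Tendsto (fun g => φ (g / g₀)) (𝓝 g₀) (𝓝 0) :=
    h1.comp (by simpa using (continuous_div_right' g₀).tendsto g₀)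
  have hlower : Tendsto (fun g => φ g₀ - φ (g / g₀)) (𝓝 g₀) (𝓝 (φ g₀)) := by
    simpa using ENNReal.Tendsto.sub tendsto_const_nhds hdiv (.inr ENNReal.zero_ne_top)
  have hupper : Tendsto (fun g => φ (g / g₀) + φ g₀) (𝓝 g₀) (𝓝 (φ g₀)) := by
    simpa using hdiv.add tendsto_const_nhds
  refine tendsto_of_tendsto_of_tendsto_of_le_of_le hlower hupper (fun g => ?_) (fun g => ?_)
  · refine tsub_le_iff_left.2 ?_
    calc φ g₀ = φ ((g / g₀)⁻¹ * g) := by simp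
      _ ≤ φ (g / g₀) + φ g := by simpa only [hinv] using hmul (g / g₀)⁻¹ g
  · simpa using hmul (g / g₀) g₀

section Action

variable [MeasurableSpace Ω] {P : Measure Ω} {T : G → Ω → Ω} {A : Set Ω}

theorem measure_preimage_symmDiff_preimage [Group G]
    (hcomp : ∀ g h : G, ∀ᵐ ω ∂P, T g (T h ω) = T (g * h) ω)
    (hpres : ∀ g, MeasurePreserving (T g) P P) (hA : MeasurableSet A) (x y : G) :
    P ((T x ⁻¹' A) ∆ (T y ⁻¹' A)) = P ((T (x / y) ⁻¹' A) ∆ A) := by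
  have hae : ((T x ⁻¹' A) ∆ (T y ⁻¹' A) : Set Ω) =ᵐ[P] T y ⁻¹' ((T (x / y) ⁻¹' A) ∆ A) := by
    refine eventuallyEq_set.2 ?_
    filter_upwards [hcomp (x / y) y] with ω hω
    rw [div_mul_cancel] at hω
    simp only [Set.mem_symmDiff, Set.mem_preimage, hω]
  rw [measure_congr hae, (hpres y).measure_preimage
    (((hpres (x / y)).measurable hA).symmDiff hA).nullMeasurableSet]

theorem measure_preimage_mul_symmDiff_le [Group G]
    (hcomp : ∀ g h : G, ∀ᵐ ω ∂P, T g (T h ω) = T (g * h) ω)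
    (hpres : ∀ g, MeasurePreserving (T g) P P) (hA : MeasurableSet A) (x y : G) :
    P ((T (x * y) ⁻¹' A) ∆ A) ≤ P ((T x ⁻¹' A) ∆ A) + P ((T y ⁻¹' A) ∆ A) := by
  calc P ((T (x * y) ⁻¹' A) ∆ A)
      ≤ P ((T (x * y) ⁻¹' A) ∆ (T y ⁻¹' A)) + P ((T y ⁻¹' A) ∆ A) := measure_symmDiff_le _ _ _
    _ = P ((T x ⁻¹' A) ∆ A) + P ((T y ⁻¹' A) ∆ A) := by
      rw [measure_preimage_symmDiff_preimage hcomp hpres hA, mul_div_cancel_right]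

theorem measure_preimage_inv_symmDiff [Group G]
    (hcomp : ∀ g h : G, ∀ᵐ ω ∂P, T g (T h ω) = T (g * h) ω)
    (hpres : ∀ g, MeasurePreserving (T g) P P) (hA : MeasurableSet A) (x : G) :
    P ((T x⁻¹ ⁻¹' A) ∆ A) = P ((T x ⁻¹' A) ∆ A) := by
  have h := measure_preimage_symmDiff_preimage hcomp hpres hA
  calc P ((T x⁻¹ ⁻¹' A) ∆ A) = P ((T 1 ⁻¹' A) ∆ (T x ⁻¹' A)) := by rw [h, one_div]
    _ = P ((T x ⁻¹' A) ∆ (T 1 ⁻¹' A)) := by rw [symmDiff_comm]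
    _ = P ((T x ⁻¹' A) ∆ A) := by rw [h, div_one]

theorem measurable_measure_preimage_symmDiff [MeasurableSpace G] [SFinite P]
    (hT : Measurable fun p : G × Ω => T p.1 p.2) (hA : MeasurableSet A) {Q : Set Ω}
    (hQ : MeasurableSet Q) : Measurable fun g => P ((T g ⁻¹' A) ∆ Q) :=
  measurable_measure_prodMk_left ((hT hA).symmDiff (measurable_snd hQ))

theorem tendsto_measure_preimage_symmDiff_nhds_one [Group G] [TopologicalSpace G]
    [IsTopologicalGroup G] [BaireSpace G] [MeasurableSpace G] [BorelSpace G]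
    [IsFiniteMeasure P] [IsSeparable P] (hT : Measurable fun p : G × Ω => T p.1 p.2)
    (hcomp : ∀ g h : G, ∀ᵐ ω ∂P, T g (T h ω) = T (g * h) ω)
    (hpres : ∀ g, MeasurePreserving (T g) P P) (hA : MeasurableSet A) :
    Tendsto (fun g => P ((T g ⁻¹' A) ∆ A)) (𝓝 1) (𝓝 0) := by
  refine ENNReal.tendsto_nhds_zero.2 fun ε hε => ?_
  obtain ⟨r, -, hr, hrε⟩ := ENNReal.lt_iff_exists_real_btwn.1 (ENNReal.half_pos hε.ne')
  obtain ⟨𝒜, h𝒜c, h𝒜⟩ := exists_countable_measureDense P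
  let ball (Q : Set Ω) : Set G := {g | P ((T g ⁻¹' A) ∆ Q) < ENNReal.ofReal r}
  have hcover : ∀ g, ∃ Q ∈ 𝒜, g ∈ ball Q := fun g =>
    h𝒜.approx _ ((hpres g).measurable hA) (measure_ne_top P _) r (ENNReal.ofReal_pos.1 hr)
  obtain ⟨Q, hQ, hQ'⟩ : ∃ Q ∈ 𝒜, ¬IsMeagre (ball Q) := by
    by_contra! h
    refine not_isMeagre_of_isOpen isOpen_univ Set.univ_nonempty
      ((isMeagre_biUnion h𝒜c h).mono fun g _ => ?_)
    simpa using hcover g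
  have hball : MeasurableSet (ball Q) :=
    measurable_measure_preimage_symmDiff hT hA (h𝒜.measurable Q hQ) measurableSet_Iio
  filter_upwards [BaireMeasurableSet.div_mem_nhds_one hball.baireMeasurableSet hQ']
  rintro _ ⟨b, hb, a, ha, rfl⟩
  calc P ((T (b / a) ⁻¹' A) ∆ A) = P ((T b ⁻¹' A) ∆ (T a ⁻¹' A)) :=
        (measure_preimage_symmDiff_preimage hcomp hpres hA b a).symm
    _ ≤ P ((T b ⁻¹' A) ∆ Q) + P (Q ∆ (T a ⁻¹' A)) := measure_symmDiff_le _ _ _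
    _ ≤ ε / 2 + ε / 2 := by
      rw [symmDiff_comm Q]
      exact add_le_add (hb.out.trans hrε).le (ha.out.trans hrε).le
    _ = ε := ENNReal.add_halves ε

end Action

theorem continuous_measure_symmDiff_of_action_general
    {G : Type*} [Group G] [TopologicalSpace G] [IsTopologicalGroup G] [PolishSpace G]
    [MeasurableSpace G] [BorelSpace G]
    {Ω : Type*} [MeasurableSpace Ω] [StandardBorelSpace Ω]
    (P : Measure Ω) [IsProbabilityMeasure P] (T : G → Ω → Ω)
    (hT : Measurable fun p : G × Ω => T p.1 p.2)
    (hcomp : ∀ g h : G, ∀ᵐ ω ∂P, T g (T h ω) = T (g * h) ω)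
    (hmp : ∀ g, ∀ A : Set Ω, MeasurableSet A → P (T g ⁻¹' A) = P A) :
    ∀ A : Set Ω, MeasurableSet A →
      Continuous fun g : G => P ((T g ⁻¹' A) ∆ A) := by
  intro A hA
  have hpres : ∀ g, MeasurePreserving (T g) P P := fun g =>
    have hTg : Measurable (T g) := hT.comp measurable_prodMk_left
    ⟨hTg, Measure.ext fun s hs => by rw [Measure.map_apply hTg hs, hmp g s hs]⟩
  exact continuous_of_tendsto_nhds_one (measure_preimage_mul_symmDiff_le hcomp hpres hA)
    (measure_preimage_inv_symmDiff hcomp hpres hA)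
    (tendsto_measure_preimage_symmDiff_nhds_one hT hcomp hpres hA)

/-- for a probability preserving action of a Polish group (with its Borel
σ-algebra) on a standard probability space, `g ↦ ℙ(T_g⁻¹(A) ∆ A)` is continuous for
every measurable `A`. -/
theorem continuous_measure_symmDiff_of_action
    {G : Type*} [Group G] [TopologicalSpace G] [IsTopologicalGroup G] [PolishSpace G]
    [MeasurableSpace G] [BorelSpace G]
    {Ω : Type*} [MeasurableSpace Ω] [StandardBorelSpace Ω]
    (P : Measure Ω) [IsProbabilityMeasure P] (T : G → Ω → Ω)
    (hT : Measurable fun p : G × Ω => T p.1 p.2)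
    (hid : ∀ᵐ ω ∂P, T 1 ω = ω)
    (hcomp : ∀ g h : G, ∀ᵐ ω ∂P, T g (T h ω) = T (g * h) ω)
    (hmp : ∀ g, ∀ A : Set Ω, MeasurableSet A → P (T g ⁻¹' A) = P A) :
    ∀ A : Set Ω, MeasurableSet A →
      Continuous fun g : G => P ((T g ⁻¹' A) ∆ A) :=
  continuous_measure_symmDiff_of_action_general P T hT hcomp hmp

end Paper
end
end

section
/- Let G be a metrizable topological semigroup with a right unit e_G (i.e. g·e_G = g for all g∈G), and let X = (X_g)_{g∈G} be a stationary G-process. Then X is stochastically continuous if and only if for every E in the product σ-algebra ℬ^G and every g₀∈G, the function G → [0,1], g ↦ ℙ_X(Q_g⁻¹(E) △ Q_{g₀}⁻¹(E)), is continuous. -/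
open MeasureTheory ProbabilityTheory Filter Topology symmDiff

noncomputable section

namespace Paper

variable {G : Type*} {Ω : Type*}

/-!
Stationarity makes every translation `Q_g` preserve the law `μ = ℙ_X`, so
`μ(Q_g⁻¹ E ∆ Q_g⁻¹ C) = μ(E ∆ C)`; as cylinder sets are measure-dense, it suffices to treat a
cylinder `{x | (x_h)_{h ∈ s} ∈ B}` with `s` finite. For it the quantity is
`P({Z_g ∈ B} ∆ {Z_{g₁} ∈ B})` for the identically distributed random vectors
`Z_g = (X_{g h})_{h ∈ s}`, which converge in probability to `Z_{g₁}` as `g → g₁`; inner regularity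
of their common law by compact sets then forces this probability to `0`.

Conversely, the right unit gives `Q_g⁻¹ {x | x_e ≤ t} = {x | x_g ≤ t}`, so continuity yields
`P({X_g ≤ t} ∆ {X_{g₀} ≤ t}) → 0` for every `t`; and whenever `|X_{g₀}| ≤ R` and
`|X_g - X_{g₀}| ≥ ε`, one of finitely many thresholds `t` separates `X_g` from `X_{g₀}`.
-/

open scoped ENNReal

section MeasureSymmDiff

variable {α ι : Type*} [MeasurableSpace α] {μ : Measure α}

theorem continuous_measure_symmDiff [TopologicalSpace ι] {A : ι → Set α}
    (h : ∀ i₁, Tendsto (fun i => μ (A i ∆ A i₁)) (𝓝 i₁) (𝓝 0)) (i₀ : ι) :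
    Continuous fun i => μ (A i ∆ A i₀) := by
  refine continuous_iff_continuousAt.2 fun i₁ => ?_
  have upper : ∀ i, μ (A i ∆ A i₀) ≤ μ (A i₁ ∆ A i₀) + μ (A i ∆ A i₁) := fun i =>
    (measure_symmDiff_le _ (A i₁) _).trans_eq (add_comm _ _)
  have lower : ∀ i, μ (A i₁ ∆ A i₀) - μ (A i ∆ A i₁) ≤ μ (A i ∆ A i₀) := fun i => by
    rw [tsub_le_iff_left, symmDiff_comm (A i)]
    exact measure_symmDiff_le _ (A i) _
  refine tendsto_of_tendsto_of_tendsto_of_le_of_le ?_ ?_ lower upper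
  · simpa using ENNReal.Tendsto.sub tendsto_const_nhds (h i₁) (Or.inr ENNReal.zero_ne_top)
  · simpa using tendsto_const_nhds.add (h i₁)

/-- Measure-preserving maps move `T ⁻¹' E` by exactly `μ (E ∆ C)` when `E` is replaced by `C`,
so the convergence passes from a measure-dense family to all measurable sets. -/
theorem tendsto_measure_preimage_symmDiff_of_measureDense [IsFiniteMeasure μ]
    {𝒜 : Set (Set α)} (h𝒜 : μ.MeasureDense 𝒜) {T : ι → α → α} {T₀ : α → α} {l : Filter ι}
    (hT : ∀ i, MeasurePreserving (T i) μ μ) (hT₀ : MeasurePreserving T₀ μ μ)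
    (h : ∀ C ∈ 𝒜, Tendsto (fun i => μ ((T i ⁻¹' C) ∆ (T₀ ⁻¹' C))) l (𝓝 0))
    {E : Set α} (hE : MeasurableSet E) :
    Tendsto (fun i => μ ((T i ⁻¹' E) ∆ (T₀ ⁻¹' E))) l (𝓝 0) := by
  refine ENNReal.tendsto_nhds_zero.2 fun ε hε => ?_
  have hε3 : 0 < ε / 3 := ENNReal.div_pos hε.ne' (by norm_num)
  obtain ⟨r, -, hr, hrε⟩ := ENNReal.lt_iff_exists_real_btwn.1 hε3
  obtain ⟨C, hC𝒜, hEC⟩ :=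
    h𝒜.approx E hE (measure_ne_top μ E) r (ENNReal.ofReal_pos.1 hr)
  have hEC' : MeasurableSet (E ∆ C) := hE.symmDiff (h𝒜.measurable C hC𝒜)
  filter_upwards [ENNReal.tendsto_nhds_zero.1 (h C hC𝒜) (ε / 3) hε3] with i hi
  calc μ ((T i ⁻¹' E) ∆ (T₀ ⁻¹' E))
      ≤ μ ((T i ⁻¹' E) ∆ (T i ⁻¹' C)) + μ ((T i ⁻¹' C) ∆ (T₀ ⁻¹' C))
          + μ ((T₀ ⁻¹' C) ∆ (T₀ ⁻¹' E)) :=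
        (measure_symmDiff_le _ (T₀ ⁻¹' C) _).trans
          (add_le_add_left (measure_symmDiff_le _ (T i ⁻¹' C) _) _)
    _ = μ (E ∆ C) + μ ((T i ⁻¹' C) ∆ (T₀ ⁻¹' C)) + μ (E ∆ C) := by
        rw [← Set.preimage_symmDiff, ← Set.preimage_symmDiff, symmDiff_comm C,
          (hT i).measure_preimage hEC'.nullMeasurableSet,
          hT₀.measure_preimage hEC'.nullMeasurableSet]
    _ ≤ ε / 3 + ε / 3 + ε / 3 := by gcongr <;> exact (hEC.trans hrε).le
    _ = ε := ENNReal.add_thirds ε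

end MeasureSymmDiff

theorem exists_finset_forall_xor_le {ε : ℝ} (hε : 0 < ε) (R : ℝ) :
    ∃ T : Finset ℝ, ∀ a b, |a| ≤ R → ε ≤ |b - a| → ∃ t ∈ T, Xor (b ≤ t) (a ≤ t) := by
  have hcover : Set.Icc (-R - ε) R ⊆ ⋃ t, Set.Ioo (t - ε) t := fun c _ =>
    Set.mem_iUnion.2 ⟨c + ε / 2, by constructor <;> linarith⟩
  obtain ⟨T, hT⟩ := isCompact_Icc.elim_finite_subcover _ (fun _ => isOpen_Ioo) hcover
  refine ⟨T, fun a b ha hab => ?_⟩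
  rw [abs_le] at ha
  rcases le_abs'.1 hab with hba | hab
  · obtain ⟨t, htT, ht⟩ := Set.mem_iUnion₂.1 (hT ⟨by linarith, by linarith⟩ : a - ε ∈ _)
    exact ⟨t, htT, Or.inl ⟨by linarith [ht.2], by linarith [ht.1]⟩⟩
  · obtain ⟨t, htT, ht⟩ := Set.mem_iUnion₂.1 (hT ⟨by linarith, ha.2⟩ : a ∈ _)
    exact ⟨t, htT, Or.inr ⟨by linarith [ht.2], by linarith [ht.1]⟩⟩

section ConvergenceInMeasure

variable {ι : Type*} [MeasurableSpace Ω] {P : Measure Ω} {l : Filter ι}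

theorem tendstoInMeasure_pi {κ : Type*} [Fintype κ] {E : κ → Type*}
    [∀ k, PseudoEMetricSpace (E k)] {f : ι → Ω → ∀ k, E k} {g : Ω → ∀ k, E k}
    (h : ∀ k, TendstoInMeasure P (fun i ω => f i ω k) l (fun ω => g ω k)) :
    TendstoInMeasure P f l g := by
  intro ε hε
  have hsub : ∀ i, {ω | ε ≤ edist (f i ω) (g ω)} ⊆ ⋃ k, {ω | ε ≤ edist (f i ω k) (g ω k)} :=
    fun i ω hω => by simpa [edist_pi_def, Finset.le_sup_iff hε] using hω
  have hsum : Tendsto (fun i => ∑ k, P {ω | ε ≤ edist (f i ω k) (g ω k)}) l (𝓝 0) := by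
    simpa using tendsto_finsetSum Finset.univ fun k _ => h k ε hε
  exact tendsto_of_tendsto_of_tendsto_of_le_of_le tendsto_const_nhds hsum (fun _ => zero_le)
    fun i => (measure_mono (hsub i)).trans (measure_iUnion_fintype_le _ _)

theorem exists_isCompact_isClosed_separating {E : Type*} [PseudoEMetricSpace E]
    [CompleteSpace E] [SecondCountableTopology E] [MeasurableSpace E] [BorelSpace E]
    (ν : Measure E) [IsFiniteMeasure ν] {B : Set E} (hB : MeasurableSet B) {δ : ℝ≥0∞}
    (hδ : δ ≠ 0) :
    ∃ K K', K ⊆ B ∧ K' ⊆ Bᶜ ∧ IsCompact K ∧ IsClosed K ∧ IsClosed K' ∧ ν (K ∪ K')ᶜ < δ := by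
  have hδ2 : δ / 2 ≠ 0 := (ENNReal.div_pos hδ (by norm_num)).ne'
  obtain ⟨K, hKB, hK, hKc, hBK⟩ :=
    hB.exists_isCompact_isClosed_sdiff_lt (measure_ne_top ν B) hδ2
  obtain ⟨K', hK'B, -, hK'c, hBK'⟩ :=
    hB.compl.exists_isCompact_isClosed_sdiff_lt (measure_ne_top ν Bᶜ) hδ2
  have hcompl : (K ∪ K')ᶜ ⊆ (B \ K) ∪ (Bᶜ \ K') := fun x hx => by
    by_cases hxB : x ∈ B <;> simp_all
  refine ⟨K, K', hKB, hK'B, hK, hKc, hK'c, ?_⟩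
  calc ν (K ∪ K')ᶜ ≤ ν (B \ K) + ν (Bᶜ \ K') :=
        (measure_mono hcompl).trans (measure_union_le _ _)
    _ < δ / 2 + δ / 2 := ENNReal.add_lt_add hBK hBK'
    _ = δ := ENNReal.add_halves δ

/-- Off a set `(K ∪ K')ᶜ` of small probability, `Z i` and `Z₀` can only fall on different sides
of `B` by being at least the positive distance between `K ⊆ B` and `K' ⊆ Bᶜ` apart. -/
theorem tendsto_measure_preimage_symmDiff_of_identDistrib {E : Type*} [PseudoEMetricSpace E]
    [CompleteSpace E] [SecondCountableTopology E] [MeasurableSpace E] [BorelSpace E]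
    [IsFiniteMeasure P] {Z : ι → Ω → E} {Z₀ : Ω → E}
    (hZ : ∀ i, IdentDistrib (Z i) Z₀ P P) (hconv : TendstoInMeasure P Z l Z₀)
    {B : Set E} (hB : MeasurableSet B) :
    Tendsto (fun i => P ((Z i ⁻¹' B) ∆ (Z₀ ⁻¹' B))) l (𝓝 0) := by
  refine ENNReal.tendsto_nhds_zero.2 fun ε hε => ?_
  have hε3 : ε / 3 ≠ 0 := (ENNReal.div_pos hε.ne' (by norm_num)).ne'
  obtain ⟨K, K', hKB, hK'B, hK, hKc, hK'c, hL⟩ :=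
    exists_isCompact_isClosed_separating (P.map Z₀) hB hε3
  obtain ⟨r, hr, hKK'⟩ := Metric.exists_pos_forall_lt_edist hK hK'c
    (disjoint_compl_right.mono hKB hK'B)
  set L := K ∪ K'
  have hLmeas : MeasurableSet Lᶜ := (hKc.measurableSet.union hK'c.measurableSet).compl
  have hsub : ∀ i, (Z i ⁻¹' B) ∆ (Z₀ ⁻¹' B) ⊆
      Z i ⁻¹' Lᶜ ∪ Z₀ ⁻¹' Lᶜ ∪ {ω | (r : ℝ≥0∞) ≤ edist (Z i ω) (Z₀ ω)} := by
    intro i ω hω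
    by_contra hout
    have hiL : Z i ω ∈ L := by_contra fun h => hout (Or.inl (Or.inl h))
    have h₀L : Z₀ ω ∈ L := by_contra fun h => hout (Or.inl (Or.inr h))
    have hclose : edist (Z i ω) (Z₀ ω) < r := not_le.1 fun h => hout (Or.inr h)
    rcases Set.mem_symmDiff.1 hω with ⟨hiB, h₀B⟩ | ⟨h₀B, hiB⟩
    · have hiK : Z i ω ∈ K := hiL.resolve_right fun h => hK'B h hiB
      have h₀K' : Z₀ ω ∈ K' := h₀L.resolve_left fun h => h₀B (hKB h)
      exact (hKK' _ hiK _ h₀K').not_gt hclose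
    · have h₀K : Z₀ ω ∈ K := h₀L.resolve_right fun h => hK'B h h₀B
      have hiK' : Z i ω ∈ K' := hiL.resolve_left fun h => hiB (hKB h)
      exact (hKK' _ h₀K _ hiK').not_gt (edist_comm (Z i ω) _ ▸ hclose)
  filter_upwards [ENNReal.tendsto_nhds_zero.1 (hconv r (by exact_mod_cast hr)) (ε / 3)
    (pos_iff_ne_zero.2 hε3)] with i hi
  have hL₀ : P (Z₀ ⁻¹' Lᶜ) < ε / 3 := by
    rwa [← Measure.map_apply_of_aemeasurable (hZ i).aemeasurable_snd hLmeas]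
  have hLi : P (Z i ⁻¹' Lᶜ) < ε / 3 := (hZ i).measure_mem_eq hLmeas ▸ hL₀
  calc P ((Z i ⁻¹' B) ∆ (Z₀ ⁻¹' B))
      ≤ P (Z i ⁻¹' Lᶜ) + P (Z₀ ⁻¹' Lᶜ) + P {ω | (r : ℝ≥0∞) ≤ edist (Z i ω) (Z₀ ω)} :=
        (measure_mono (hsub i)).trans
          ((measure_union_le _ _).trans (add_le_add_left (measure_union_le _ _) _))
    _ ≤ ε / 3 + ε / 3 + ε / 3 := by gcongr
    _ = ε := ENNReal.add_thirds ε

variable [IsFiniteMeasure P]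

theorem tendsto_measure_abs_gt_atTop {Y : Ω → ℝ} (hY : Measurable Y) :
    Tendsto (fun R : ℝ => P {ω | R < |Y ω|}) atTop (𝓝 0) := by
  have hempty : ⋂ R : ℝ, {ω | R < |Y ω|} = ∅ :=
    Set.iInter_eq_empty_iff.2 fun ω => ⟨|Y ω|, (lt_irrefl _ : ¬ |Y ω| < |Y ω|)⟩
  have := tendsto_measure_iInter_atTop (μ := P)
    (fun R => (measurableSet_lt measurable_const hY.abs).nullMeasurableSet)
    (fun R R' hRR' ω (hω : R' < |Y ω|) => (hRR'.trans_lt hω : R < |Y ω|))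
    ⟨0, measure_ne_top P _⟩
  rwa [hempty, measure_empty] at this

theorem tendstoInMeasure_of_tendsto_measure_le_symmDiff {Y : ι → Ω → ℝ} {Y₀ : Ω → ℝ}
    (hY₀ : Measurable Y₀)
    (h : ∀ t, Tendsto (fun i => P ({ω | Y i ω ≤ t} ∆ {ω | Y₀ ω ≤ t})) l (𝓝 0)) :
    TendstoInMeasure P Y l Y₀ := by
  refine tendstoInMeasure_iff_dist.2 fun ε hε => ENNReal.tendsto_nhds_zero.2 fun δ hδ => ?_
  have hδ2 : 0 < δ / 2 := ENNReal.div_pos hδ.ne' (by norm_num)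
  obtain ⟨R, hR⟩ :=
    ((ENNReal.tendsto_nhds_zero.1 (tendsto_measure_abs_gt_atTop (P := P) hY₀)) _ hδ2).exists
  obtain ⟨T, hT⟩ := exists_finset_forall_xor_le hε R
  have hsum : Tendsto (fun i => ∑ t ∈ T, P ({ω | Y i ω ≤ t} ∆ {ω | Y₀ ω ≤ t})) l (𝓝 0) := by
    simpa using tendsto_finsetSum T fun t _ => h t
  filter_upwards [ENNReal.tendsto_nhds_zero.1 hsum _ hδ2] with i hi
  have hsub : {ω | ε ≤ dist (Y i ω) (Y₀ ω)} ⊆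
      {ω | R < |Y₀ ω|} ∪ ⋃ t ∈ T, {ω | Y i ω ≤ t} ∆ {ω | Y₀ ω ≤ t} := by
    intro ω hω
    rcases lt_or_ge R |Y₀ ω| with hbig | hsmall
    · exact Or.inl hbig
    · obtain ⟨t, htT, hxor⟩ := hT _ _ hsmall (by rwa [← Real.dist_eq])
      exact Or.inr (Set.mem_biUnion htT hxor)
  calc P {ω | ε ≤ dist (Y i ω) (Y₀ ω)}
      ≤ P {ω | R < |Y₀ ω|} + ∑ t ∈ T, P ({ω | Y i ω ≤ t} ∆ {ω | Y₀ ω ≤ t}) :=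
        (measure_mono hsub).trans
          ((measure_union_le _ _).trans (add_le_add le_rfl (measure_biUnion_finset_le _ _)))
    _ ≤ δ / 2 + δ / 2 := add_le_add hR hi
    _ = δ := ENNReal.add_halves δ

end ConvergenceInMeasure

section Translation

variable [MeasurableSpace Ω] {P : Measure Ω} {X : G → Ω → ℝ}

theorem measurable_transMap [Mul G] (g : G) : Measurable (transMap (G := G) g) :=
  measurable_pi_lambda _ fun h => measurable_pi_apply (g * h)

theorem procLaw_apply (hmeas : ∀ g, Measurable (X g)) {A : Set (G → ℝ)}
    (hA : MeasurableSet A) : procLaw P X A = P ((fun ω g => X g ω) ⁻¹' A) :=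
  Measure.map_apply (measurable_pi_lambda _ hmeas) hA

theorem Stationary.measurePreserving_transMap [Mul G] (hmeas : ∀ g, Measurable (X g))
    (hstat : Stationary P X) (g : G) :
    MeasurePreserving (transMap g) (procLaw P X) (procLaw P X) := by
  refine ⟨measurable_transMap g, ?_⟩
  rw [procLaw, Measure.map_map (measurable_transMap g) (measurable_pi_lambda _ hmeas)]
  exact hstat g

theorem StochasticallyContinuous.tendsto_procLaw_symmDiff_cylinder [Mul G] [TopologicalSpace G]
    [ContinuousMul G] [IsFiniteMeasure P] (hsc : StochasticallyContinuous P X)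
    (hmeas : ∀ g, Measurable (X g)) (hstat : Stationary P X) (s : Finset G)
    {B : Set (s → ℝ)} (hB : MeasurableSet B) (g₁ : G) :
    Tendsto (fun g => procLaw P X
        ((transMap g ⁻¹' cylinder s B) ∆ (transMap g₁ ⁻¹' cylinder s B))) (𝓝 g₁) (𝓝 0) := by
  set Z : G → Ω → s → ℝ := fun g ω i => X (g * i) ω
  have hZmeas : ∀ g, Measurable (Z g) := fun g => measurable_pi_lambda _ fun i => hmeas _
  have hlaw : ∀ g, P.map (Z g) = (procLaw P X).map (fun (x : G → ℝ) (i : s) => x i) := fun g => by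
    rw [← hstat g, procLaw, Measure.map_map (measurable_pi_lambda _ fun i => measurable_pi_apply _)
      (measurable_pi_lambda _ fun h => hmeas (g * h))]
    rfl
  have hident : ∀ g, IdentDistrib (Z g) (Z g₁) P P := fun g =>
    ⟨(hZmeas g).aemeasurable, (hZmeas g₁).aemeasurable, (hlaw g).trans (hlaw g₁).symm⟩
  have hconv : TendstoInMeasure P Z (𝓝 g₁) (Z g₁) :=
    tendstoInMeasure_pi fun i => (hsc (g₁ * i)).comp ((continuous_mul_const (i : G)).tendsto g₁)
  have hcyl : MeasurableSet (cylinder s B) := MeasurableSet.cylinder (α := fun _ : G => ℝ) s hB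
  have hpre : ∀ g, procLaw P X ((transMap g ⁻¹' cylinder s B) ∆ (transMap g₁ ⁻¹' cylinder s B))
      = P ((Z g ⁻¹' B) ∆ (Z g₁ ⁻¹' B)) := fun g => by
    rw [procLaw_apply hmeas ((measurable_transMap g hcyl).symmDiff (measurable_transMap g₁ hcyl))]
    rfl
  simpa only [hpre] using tendsto_measure_preimage_symmDiff_of_identDistrib hident hconv hB

theorem StochasticallyContinuous.tendsto_procLaw_symmDiff [Mul G] [TopologicalSpace G]
    [ContinuousMul G] [IsFiniteMeasure P] (hsc : StochasticallyContinuous P X)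
    (hmeas : ∀ g, Measurable (X g)) (hstat : Stationary P X) {E : Set (G → ℝ)}
    (hE : MeasurableSet E) (g₁ : G) :
    Tendsto (fun g => procLaw P X ((transMap g ⁻¹' E) ∆ (transMap g₁ ⁻¹' E))) (𝓝 g₁) (𝓝 0) := by
  have : IsFiniteMeasure (procLaw P X) := Measure.isFiniteMeasure_map P _
  have hdense : (procLaw P X).MeasureDense (measurableCylinders fun _ : G => ℝ) :=
    .of_generateFrom_isSetAlgebra_finite _ isSetAlgebra_measurableCylinders
      generateFrom_measurableCylinders.symm
  refine tendsto_measure_preimage_symmDiff_of_measureDense hdense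
    (hstat.measurePreserving_transMap hmeas) (hstat.measurePreserving_transMap hmeas g₁)
    (fun C hC => ?_) hE
  obtain ⟨s, B, hB, rfl⟩ := (mem_measurableCylinders C).1 hC
  exact hsc.tendsto_procLaw_symmDiff_cylinder hmeas hstat s hB g₁

theorem stochasticallyContinuous_of_continuous_procLaw_symmDiff [Mul G] [TopologicalSpace G]
    [IsFiniteMeasure P] (e : G) (he : ∀ g : G, g * e = g) (hmeas : ∀ g, Measurable (X g))
    (hcont : ∀ E : Set (G → ℝ), MeasurableSet E → ∀ g₀ : G,
      Continuous fun g : G => procLaw P X ((transMap g ⁻¹' E) ∆ (transMap g₀ ⁻¹' E))) :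
    StochasticallyContinuous P X := by
  refine fun g₀ => tendstoInMeasure_of_tendsto_measure_le_symmDiff (hmeas g₀) fun t => ?_
  have hEt : MeasurableSet {x : G → ℝ | x e ≤ t} :=
    measurableSet_le (measurable_pi_apply e) measurable_const
  have hpre : ∀ g, procLaw P X ((transMap g ⁻¹' {x | x e ≤ t}) ∆ (transMap g₀ ⁻¹' {x | x e ≤ t}))
      = P ({ω | X g ω ≤ t} ∆ {ω | X g₀ ω ≤ t}) := fun g => by
    rw [procLaw_apply hmeas ((measurable_transMap g hEt).symmDiff (measurable_transMap g₀ hEt))]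
    congr 1
    ext ω
    simp [transMap, he]
  have h := (hcont _ hEt g₀).tendsto g₀
  simp only [hpre, symmDiff_self, Set.bot_eq_empty, measure_empty] at h
  exact h

end Translation

theorem pursley_semigroup_general
    {G : Type*} [Semigroup G] [TopologicalSpace G]
    [ContinuousMul G] (e : G) (he : ∀ g : G, g * e = g)
    {Ω : Type*} [MeasurableSpace Ω] (P : Measure Ω) [IsProbabilityMeasure P]
    (X : G → Ω → ℝ) (hmeas : ∀ g, Measurable (X g)) (hstat : Stationary P X) :
    StochasticallyContinuous P X ↔
      ∀ E : Set (G → ℝ), MeasurableSet E → ∀ g₀ : G,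
        Continuous fun g : G =>
          procLaw P X ((transMap g ⁻¹' E) ∆ (transMap g₀ ⁻¹' E)) := by
  refine ⟨fun hsc E hE g₀ => ?_, stochasticallyContinuous_of_continuous_procLaw_symmDiff e he hmeas⟩
  exact continuous_measure_symmDiff (hsc.tendsto_procLaw_symmDiff hmeas hstat hE) g₀

/-- Hoffmann-Jørgensen/Pursley: a stationary process over a metrizable
topological semigroup `G` with a right unit `e` is stochastically continuous iff for
every `E ∈ ℬ^G` and `g₀ ∈ G` the map `g ↦ ℙ_X(Q_g⁻¹(E) ∆ Q_{g₀}⁻¹(E))` is continuous. -/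
theorem pursley_semigroup
    {G : Type*} [Semigroup G] [TopologicalSpace G] [TopologicalSpace.MetrizableSpace G]
    [ContinuousMul G] (e : G) (he : ∀ g : G, g * e = g)
    {Ω : Type*} [MeasurableSpace Ω] (P : Measure Ω) [IsProbabilityMeasure P]
    (X : G → Ω → ℝ) (hmeas : ∀ g, Measurable (X g)) (hstat : Stationary P X) :
    StochasticallyContinuous P X ↔
      ∀ E : Set (G → ℝ), MeasurableSet E → ∀ g₀ : G,
        Continuous fun g : G =>
          procLaw P X ((transMap g ⁻¹' E) ∆ (transMap g₀ ⁻¹' E)) :=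
  pursley_semigroup_general e he P X hmeas hstat

end Paper
end
end
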